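/- arXiv:math/0503545 — 3 statements merged into one kernel-verified Lean document; each statement's English description precedes it below -/
import Mathlib

section
/- Let K be a field in which every element has a square root (e.g. K algebraically closed). Then the images of the group algebras of the symplectic group and of the symplectic similitude group in the endomorphism algebra of tensor space coincide: ψ(K·Sp(V)) = ψ(K·GSp(V)) as subalgebras of End_K(V^{⊗n}). -/
open scoped BigOperators Classical
open MulOpposite

noncomputable section

namespace SpBrauer

/-- the conjugate index `i' = 2m-1-i` (0-based version of `2m+1-i`). -/
def conjIdx (m : ℕ) (i : Fin (2*m)) : Fin (2*m) :=
  ⟨2*m - 1 - (i : ℕ), by have := i.isLt; omega⟩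

/-- the sign `ε_{ij}`. -/
def epsZ (m : ℕ) (i j : Fin (2*m)) : ℤ :=
  if (i : ℕ) + (j : ℕ) + 1 = 2*m then (if (i : ℕ) < (j : ℕ) then 1 else -1) else 0

/-- tensor space `V^{⊗ n}` modelled as the free module on multi-indices. -/
abbrev Ten (R : Type) (m n : ℕ) : Type := (Fin n → Fin (2*m)) → R

/-- basis tensor `v_{i_1} ⊗ ⋯ ⊗ v_{i_n}`. -/
def dta (R : Type) [CommRing R] (m n : ℕ) (i : Fin n → Fin (2*m)) : Ten R m n :=
  fun a => if a = i then 1 else 0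

/-- the linear map on free modules with "matrix" `M`. -/
def funMap (R : Type) [CommRing R] (α β : Type) [Fintype α]
    (M : β → α → R) : (α → R) →ₗ[R] (β → R) where
  toFun f := fun b => ∑ a, M b a * f a
  map_add' f g := by
    funext b
    simp [Pi.add_apply, mul_add, Finset.sum_add_distrib]
  map_smul' c f := by
    funext b
    simp only [Pi.smul_apply, smul_eq_mul, RingHom.id_apply]
    rw [Finset.mul_sum]
    exact Finset.sum_congr rfl (fun a _ => by ring)

/-- the operator given by the right action of the Brauer algebra generator `s_j`
(`j` is 0-based: `s_j` swaps positions `j` and `j+1` with a sign). -/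
def sOp (R : Type) [CommRing R] (m n : ℕ) (j : Fin (n-1)) :
    Ten R m n →ₗ[R] Ten R m n :=
  funMap R _ _ (fun a b =>
    if b = a ∘ (Equiv.swap (⟨(j:ℕ), by have := j.isLt; omega⟩ : Fin n)
        (⟨(j:ℕ)+1, by have := j.isLt; omega⟩ : Fin n)) then -1 else 0)

/-- the operator given by the right action of the Brauer algebra generator `e_j`. -/
def eOp (R : Type) [CommRing R] (m n : ℕ) (j : Fin (n-1)) :
    Ten R m n →ₗ[R] Ten R m n :=
  funMap R _ _ (fun a b =>
    (if ∀ p : Fin n, p ≠ (⟨(j:ℕ), by have := j.isLt; omega⟩ : Fin n) →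
        p ≠ (⟨(j:ℕ)+1, by have := j.isLt; omega⟩ : Fin n) → b p = a p then 1 else 0) *
    (-((epsZ m (a ⟨(j:ℕ), by have := j.isLt; omega⟩) (a ⟨(j:ℕ)+1, by have := j.isLt; omega⟩) : ℤ) : R)) *
    ((epsZ m (b ⟨(j:ℕ), by have := j.isLt; omega⟩) (b ⟨(j:ℕ)+1, by have := j.isLt; omega⟩) : ℤ) : R))

/-- the (sign-twisted) right place-permutation action of a permutation on tensor space. -/
def permOp (R : Type) [CommRing R] (m n : ℕ) (π : Equiv.Perm (Fin n)) :
    Ten R m n →ₗ[R] Ten R m n :=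
  funMap R _ _ (fun a b => if b = a ∘ π then ((Equiv.Perm.sign π : ℤ) : R) else 0)

/-- the `n`-fold tensor power of (the endomorphism of `V` given by) a matrix `g`,
acting diagonally on tensor space. -/
def tenOp (R : Type) [CommRing R] (m n : ℕ) (g : Matrix (Fin (2*m)) (Fin (2*m)) R) :
    Ten R m n →ₗ[R] Ten R m n :=
  funMap R _ _ (fun a b => ∏ k : Fin n, g (a k) (b k))

/-- the skew-symmetric bilinear form `(v,w)` determined by `(v_i, v_j) = ε_{ij}`. -/
def sform (R : Type) [CommRing R] (m : ℕ) (v w : Fin (2*m) → R) : R :=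
  ∑ i, ∑ j, v i * ((epsZ m i j : ℤ) : R) * w j

/-- membership in the symplectic group `Sp(V)` (an invertible linear map preserving the form). -/
def IsSymp (R : Type) [CommRing R] (m : ℕ) (g : Matrix (Fin (2*m)) (Fin (2*m)) R) : Prop :=
  IsUnit g.det ∧ ∀ v w, sform R m (g.mulVec v) (g.mulVec w) = sform R m v w

/-- membership in the symplectic similitude group `GSp(V)`. -/
def IsGSymp (R : Type) [CommRing R] (m : ℕ) (g : Matrix (Fin (2*m)) (Fin (2*m)) R) : Prop :=
  IsUnit g.det ∧ ∃ d : R, d ≠ 0 ∧ ∀ v w, sform R m (g.mulVec v) (g.mulVec w) = d * sform R m v w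

/-! ### The Brauer algebra, by generators and relations -/

/-- generators of the Brauer algebra `B_n(x)`:  `s i` and `e i` for `i = 0, …, n-2`
(0-based versions of `s_1, …, s_{n-1}`, `e_1, …, e_{n-1}`). -/
inductive BGen (n : ℕ) : Type
  | s : Fin (n-1) → BGen n
  | e : Fin (n-1) → BGen n

/-- the defining relations of the Brauer algebra `B_n(x)`. -/
inductive BRel (R : Type) [CommRing R] (x : R) (n : ℕ) :
    FreeAlgebra R (BGen n) → FreeAlgebra R (BGen n) → Prop
  | ss (i : Fin (n-1)) :
      BRel R x n (FreeAlgebra.ι R (BGen.s i) * FreeAlgebra.ι R (BGen.s i)) 1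
  | ee (i : Fin (n-1)) :
      BRel R x n (FreeAlgebra.ι R (BGen.e i) * FreeAlgebra.ι R (BGen.e i))
        (x • FreeAlgebra.ι R (BGen.e i))
  | es (i : Fin (n-1)) :
      BRel R x n (FreeAlgebra.ι R (BGen.e i) * FreeAlgebra.ι R (BGen.s i))
        (FreeAlgebra.ι R (BGen.e i))
  | se (i : Fin (n-1)) :
      BRel R x n (FreeAlgebra.ι R (BGen.s i) * FreeAlgebra.ι R (BGen.e i))
        (FreeAlgebra.ι R (BGen.e i))
  | ssComm (i j : Fin (n-1)) (h : (i:ℕ)+1 < (j:ℕ)) :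
      BRel R x n (FreeAlgebra.ι R (BGen.s i) * FreeAlgebra.ι R (BGen.s j))
        (FreeAlgebra.ι R (BGen.s j) * FreeAlgebra.ι R (BGen.s i))
  | seComm (i j : Fin (n-1)) (h : (i:ℕ)+1 < (j:ℕ)) :
      BRel R x n (FreeAlgebra.ι R (BGen.s i) * FreeAlgebra.ι R (BGen.e j))
        (FreeAlgebra.ι R (BGen.e j) * FreeAlgebra.ι R (BGen.s i))
  | eeComm (i j : Fin (n-1)) (h : (i:ℕ)+1 < (j:ℕ)) :
      BRel R x n (FreeAlgebra.ι R (BGen.e i) * FreeAlgebra.ι R (BGen.e j))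
        (FreeAlgebra.ι R (BGen.e j) * FreeAlgebra.ι R (BGen.e i))
  | braid (i j : Fin (n-1)) (h : (j:ℕ) = (i:ℕ)+1) :
      BRel R x n
        (FreeAlgebra.ι R (BGen.s i) * FreeAlgebra.ι R (BGen.s j) * FreeAlgebra.ι R (BGen.s i))
        (FreeAlgebra.ι R (BGen.s j) * FreeAlgebra.ι R (BGen.s i) * FreeAlgebra.ι R (BGen.s j))
  | eje (i j : Fin (n-1)) (h : (j:ℕ) = (i:ℕ)+1) :
      BRel R x n
        (FreeAlgebra.ι R (BGen.e i) * FreeAlgebra.ι R (BGen.e j) * FreeAlgebra.ι R (BGen.e i))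
        (FreeAlgebra.ι R (BGen.e i))
  | eje' (i j : Fin (n-1)) (h : (j:ℕ) = (i:ℕ)+1) :
      BRel R x n
        (FreeAlgebra.ι R (BGen.e j) * FreeAlgebra.ι R (BGen.e i) * FreeAlgebra.ι R (BGen.e j))
        (FreeAlgebra.ι R (BGen.e j))
  | see (i j : Fin (n-1)) (h : (j:ℕ) = (i:ℕ)+1) :
      BRel R x n
        (FreeAlgebra.ι R (BGen.s i) * FreeAlgebra.ι R (BGen.e j) * FreeAlgebra.ι R (BGen.e i))
        (FreeAlgebra.ι R (BGen.s j) * FreeAlgebra.ι R (BGen.e i))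
  | ees (i j : Fin (n-1)) (h : (j:ℕ) = (i:ℕ)+1) :
      BRel R x n
        (FreeAlgebra.ι R (BGen.e j) * FreeAlgebra.ι R (BGen.e i) * FreeAlgebra.ι R (BGen.s j))
        (FreeAlgebra.ι R (BGen.e j) * FreeAlgebra.ι R (BGen.s i))

/-- the Brauer algebra `B_n(x)` over `R`, presented by generators and relations. -/
abbrev BrauerAlg (R : Type) [CommRing R] (x : R) (n : ℕ) : Type := RingQuot (BRel R x n)

/-- the generator `s_i` of the Brauer algebra (0-based index). -/
def bS (R : Type) [CommRing R] (x : R) (n : ℕ) (i : Fin (n-1)) : BrauerAlg R x n :=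
  RingQuot.mkAlgHom R (BRel R x n) (FreeAlgebra.ι R (BGen.s i))

/-- the generator `e_i` of the Brauer algebra (0-based index). -/
def bE (R : Type) [CommRing R] (x : R) (n : ℕ) (i : Fin (n-1)) : BrauerAlg R x n :=
  RingQuot.mkAlgHom R (BRel R x n) (FreeAlgebra.ι R (BGen.e i))

/-- the element `E_f = e_1 e_3 ⋯ e_{2f-1}` of the Brauer algebra. -/
def EfB (R : Type) [CommRing R] (x : R) (n f : ℕ) (hf : 2*f ≤ n) : BrauerAlg R x n :=
  (List.ofFn (fun i : Fin f => bE R x n ⟨2*(i:ℕ), by have := i.isLt; omega⟩)).prod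

/-- the two-sided ideal `B^{(f)}` of the Brauer algebra generated by `E_f`
(it is `0` when `2f > n`, matching the convention of the paper). -/
def Bideal (R : Type) [CommRing R] (x : R) (n f : ℕ) : Submodule R (BrauerAlg R x n) :=
  Submodule.span R {y | ∃ (hf : 2*f ≤ n) (a b : BrauerAlg R x n), y = a * EfB R x n f hf * b}

/-- the operator on tensor space given by the right action of `E_f = e_1e_3⋯e_{2f-1}`. -/
def EfOp (R : Type) [CommRing R] (m n f : ℕ) (hf : 2*f ≤ n) :
    Module.End R (Ten R m n) :=
  (List.ofFn (fun i : Fin f => eOp R m n ⟨2*(i:ℕ), by have := i.isLt; omega⟩)).prod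

/-! ### Combinatorial predicates -/

/-- `σ ∈ S_{{2f+1, …, n}}`, i.e. `σ` fixes `1, …, 2f` pointwise (0-based). -/
def FixLow (n f : ℕ) (σ : Equiv.Perm (Fin n)) : Prop :=
  ∀ a : Fin n, (a:ℕ) < 2*f → σ a = a

/-- `σ ∈ S_{2f} = S_{{1, …, 2f}}`, i.e. `σ` fixes `2f+1, …, n` pointwise (0-based). -/
def FixHigh (n f : ℕ) (σ : Equiv.Perm (Fin n)) : Prop :=
  ∀ a : Fin n, 2*f ≤ (a:ℕ) → σ a = a

/-- membership in `D_{ν_f}`:  the bitableau `t^{ν_f}·d` is row standard and the first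
column of its first component is increasing (everything 0-based; `d a` is the entry
at the cell of `t^{ν_f}` containing `a`). -/
def DnuP (n f : ℕ) (d : Equiv.Perm (Fin n)) : Prop :=
  (∀ a b : Fin n, (a:ℕ) % 2 = 0 → (b:ℕ) = (a:ℕ)+1 → (b:ℕ) < 2*f → d a < d b) ∧
  (∀ a b : Fin n, (a:ℕ) % 2 = 0 → (b:ℕ) % 2 = 0 → (a:ℕ) < (b:ℕ) → (b:ℕ) < 2*f → d a < d b) ∧
  (∀ a b : Fin n, 2*f ≤ (a:ℕ) → (b:ℕ) = (a:ℕ)+1 → d a < d b)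

/-- membership in `D_f = D_{ν_f} ∩ S_{2f}`. -/
def DfP (n f : ℕ) (d : Equiv.Perm (Fin n)) : Prop :=
  DnuP n f d ∧ FixHigh n f d

/-- membership in the row stabilizer `S_{(2^f)}` of the initial `(2^f)`-tableau
(whose rows are `{1,2}, {3,4}, …, {2f-1,2f}`), inside `S_{2f} ≤ S_n`. -/
def RowStabP (n f : ℕ) (w : Equiv.Perm (Fin n)) : Prop :=
  FixHigh n f w ∧ ∀ a : Fin n, ((w a : ℕ))/2 = (a:ℕ)/2

/-- membership in `Ψ`, the normalizer of `S_{(2^f)}` in `S_{2f}`. -/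
def PsiP (n f : ℕ) (z : Equiv.Perm (Fin n)) : Prop :=
  FixHigh n f z ∧ ∀ w, RowStabP n f w ↔ RowStabP n f (z * w * z⁻¹)

/-- `d_J` for a `2f`-element subset `J ⊆ {1, …, n}`:  the unique permutation
enumerating `J` increasingly on the first `2f` positions and the complement of `J`
increasingly on the remaining positions. -/
def IsdJ (n f : ℕ) (J : Finset (Fin n)) (d : Equiv.Perm (Fin n)) : Prop :=
  (∀ a : Fin n, ((a:ℕ) < 2*f → d a ∈ J) ∧ (2*f ≤ (a:ℕ) → d a ∉ J)) ∧
  (∀ a b : Fin n, (a:ℕ) < (b:ℕ) → (b:ℕ) < 2*f → d a < d b) ∧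
  (∀ a b : Fin n, 2*f ≤ (a:ℕ) → (a:ℕ) < (b:ℕ) → d a < d b)

/-- membership in `S_{(2f, n-2f)} = S_{{1,…,2f}} × S_{{2f+1,…,n}}`. -/
def BlockP (n f : ℕ) (d : Equiv.Perm (Fin n)) : Prop :=
  ∀ a : Fin n, (a:ℕ) < 2*f ↔ ((d a : ℕ)) < 2*f

/-- the multi-index `c = (1, 1', 2, 2', …, f, f')`, completed by an
arbitrary multi-index `kk` on the positions `> 2f`. -/
def cIdx (m n f : ℕ) (hfm : f ≤ m) (kk : Fin n → Fin (2*m)) : Fin n → Fin (2*m) :=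
  fun p => if h : (p:ℕ) < 2*f then
    (if (p:ℕ) % 2 = 0 then (⟨(p:ℕ)/2, by omega⟩ : Fin (2*m))
     else conjIdx m ⟨(p:ℕ)/2, by omega⟩)
  else kk p

/-- the multi-index `ĉ = (f+1, (f+1)', …, 2f, (2f)') ∈ I(2m, 2f)`. -/
def cHatIdx (m f : ℕ) (hfm : 2*f ≤ m) : Fin (2*f) → Fin (2*m) :=
  fun p => if (p:ℕ) % 2 = 0 then (⟨f + (p:ℕ)/2, by have := p.isLt; omega⟩ : Fin (2*m))
           else conjIdx m ⟨f + (p:ℕ)/2, by have := p.isLt; omega⟩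

/-- membership in `I_f` (only the values at positions `> 2f` matter):
`2f+1 ≤ kk p ≤ m` (1-based) for all positions `p > 2f`. -/
def IfP (m n f : ℕ) (kk : Fin n → Fin (2*m)) : Prop :=
  ∀ p : Fin n, 2*f ≤ (p:ℕ) → 2*f ≤ ((kk p : ℕ)) ∧ ((kk p : ℕ)) < m

/-- the weight of a multi-index. -/
def wtOf (m k : ℕ) (a : Fin k → Fin (2*m)) : Fin (2*m) → ℕ :=
  fun j => (Finset.univ.filter (fun p => a p = j)).card

/-- the weight-`μ` component of an element of tensor space. -/
def wcomp (R : Type) [CommRing R] (m k : ℕ) (μ : Fin (2*m) → ℕ) (w : Ten R m k) :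
    Ten R m k :=
  fun a => if wtOf m k a = μ then w a else 0

/-- partial sums of a partition. -/
def psum (l : ℕ → ℕ) (r : ℕ) : ℕ := ∑ i ∈ Finset.range r, l i

/-- `l` represents a partition of `n - 2f` (parts listed weakly decreasingly). -/
def PartP (n f : ℕ) (l : ℕ → ℕ) : Prop :=
  (∀ i, l (i+1) ≤ l i) ∧ psum l n = n - 2*f ∧ ∀ i, n ≤ i → l i = 0

/-- membership in the Young subgroup `S_λ ≤ S_{{2f+1, …, n}}` stabilizing the rows of
the initial `λ`-tableau `t^λ` (with entries `2f+1, …, n`). -/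
def InSlam (n f : ℕ) (l : ℕ → ℕ) (w : Equiv.Perm (Fin n)) : Prop :=
  (∀ a : Fin n, (a:ℕ) < 2*f → w a = a) ∧
  (∀ (a : Fin n) (r : ℕ), 2*f + psum l r ≤ (a:ℕ) → (a:ℕ) < 2*f + psum l (r+1) →
     2*f + psum l r ≤ ((w a : ℕ)) ∧ ((w a : ℕ)) < 2*f + psum l (r+1))

/-- `d = d(t)` for a standard `λ`-tableau `t` with entries `2f+1, …, n`, i.e.
`d ∈ S_{{2f+1,…,n}}` and `t^λ · d` is standard. -/
def StdP (n f : ℕ) (l : ℕ → ℕ) (d : Equiv.Perm (Fin n)) : Prop :=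
  FixLow n f d ∧
  (∀ (a b : Fin n) (r c : ℕ), (a:ℕ) = 2*f + psum l r + c → c+1 < l r →
     (b:ℕ) = (a:ℕ)+1 → d a < d b) ∧
  (∀ (a b : Fin n) (r c : ℕ), (a:ℕ) = 2*f + psum l r + c → c < l (r+1) →
     (b:ℕ) = 2*f + psum l (r+1) + c → d a < d b)

/-- the embedding of the index set of the basis of `V` into that of `Ṽ`
(`v_i ↦ ṽ_i`, `v_{i'} ↦ ṽ_{i'}`). -/
def embIdx (m m0 : ℕ) (h : m ≤ m0) : Fin (2*m) → Fin (2*m0) :=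
  fun j => if (j:ℕ) < m then ⟨(j:ℕ), by have := j.isLt; omega⟩
           else ⟨(j:ℕ) + 2*(m0 - m), by have := j.isLt; omega⟩

/-- the inclusion `V^{⊗n} ↪ Ṽ^{⊗n}`. -/
def inclT (R : Type) [CommRing R] (m m0 n : ℕ) (h : m ≤ m0) :
    Ten R m n →ₗ[R] Ten R m0 n :=
  funMap R _ _ (fun (b : Fin n → Fin (2*m0)) (a : Fin n → Fin (2*m)) =>
    if b = embIdx m m0 h ∘ a then 1 else 0)

/-- the projection `π_K : Ṽ^{⊗n} ↠ V^{⊗n}` killing all basis tensors containing a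
factor `ṽ_i` or `ṽ_{i'}` with `m+1 ≤ i ≤ m_0`. -/
def projT (R : Type) [CommRing R] (m m0 n : ℕ) (h : m ≤ m0) :
    Ten R m0 n →ₗ[R] Ten R m n :=
  funMap R _ _ (fun (a : Fin n → Fin (2*m)) (b : Fin n → Fin (2*m0)) =>
    if b = embIdx m m0 h ∘ a then 1 else 0)


lemma tenOp_smul (K : Type) [Field K] (m n : ℕ) (c : K)
    (g : Matrix (Fin (2*m)) (Fin (2*m)) K) :
    tenOp K m n (c • g) = (c ^ n) • tenOp K m n g := by
  apply LinearMap.ext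
  intro f
  funext b
  simp only [tenOp, funMap, LinearMap.coe_mk, AddHom.coe_mk, LinearMap.smul_apply,
    Pi.smul_apply, smul_eq_mul, Matrix.smul_apply]
  rw [Finset.mul_sum]
  refine Finset.sum_congr rfl (fun a _ => ?_)
  rw [Finset.prod_mul_distrib, Finset.prod_const]
  simp [Finset.card_univ, mul_assoc]

lemma sform_smul (K : Type) [Field K] (m : ℕ) (c : K) (v w : Fin (2*m) → K) :
    sform K m (c • v) (c • w) = (c * c) * sform K m v w := by
  simp only [sform, Pi.smul_apply, smul_eq_mul, Finset.mul_sum]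
  refine Finset.sum_congr rfl (fun i _ => ?_)
  refine Finset.sum_congr rfl (fun j _ => ?_)
  ring

/-- If every element of the field `K` has a square root, then the images of
the group algebras of `Sp(V)` and `GSp(V)` in `End_K(V^{⊗n})` coincide:
`ψ(K·Sp(V)) = ψ(K·GSp(V))`. -/
theorem sp_gsp_images_coincide
    (K : Type) [Field K] (m n : ℕ) (hm : 0 < m) (hn : 0 < n)
    (hsq : ∀ a : K, ∃ b : K, b * b = a) :
    Submodule.span K (tenOp K m n '' {g | IsSymp K m g}) =
      Submodule.span K (tenOp K m n '' {g | IsGSymp K m g}) := by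
  apply le_antisymm
  · apply Submodule.span_mono
    apply Set.image_mono
    rintro g ⟨hdet, hform⟩
    exact ⟨hdet, 1, one_ne_zero, fun v w => by rw [hform v w, one_mul]⟩
  · rw [Submodule.span_le]
    rintro _ ⟨g, ⟨hdet, d, hd0, hform⟩, rfl⟩
    obtain ⟨b, hb⟩ := hsq d
    have hb0 : b ≠ 0 := by
      intro h; apply hd0; rw [← hb, h, mul_zero]
    set h : Matrix (Fin (2*m)) (Fin (2*m)) K := b⁻¹ • g with hh
    have hg : g = b • h := by
      rw [hh, smul_smul, mul_inv_cancel₀ hb0, one_smul]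
    have hSymp : IsSymp K m h := by
      constructor
      · rw [hh, Matrix.det_smul]
        exact (IsUnit.pow _ (isUnit_iff_ne_zero.mpr (inv_ne_zero hb0))).mul hdet
      · intro v w
        have : h.mulVec v = b⁻¹ • (g.mulVec v) := by
          rw [hh, Matrix.smul_mulVec]
        rw [this, show h.mulVec w = b⁻¹ • (g.mulVec w) from by
          rw [hh, Matrix.smul_mulVec], sform_smul, hform]
        field_simp
        rw [← hb]; ring
    have : tenOp K m n g = (b ^ n) • tenOp K m n h := by
      rw [hg, tenOp_smul]
    rw [SetLike.mem_coe, this]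
    exact Submodule.smul_mem _ _ (Submodule.subset_span ⟨h, hSymp, rfl⟩)

end SpBrauer
end
end

section
/- Let K be an infinite field, m = 2, n = 3, V = K^4. Then the element α := (1+s_1)(1+s_2+s_2s_1) + (1+s_2+s_1s_2)e_1(1+s_2+s_2s_1) of the Brauer algebra B_3(−4) lies in the kernel of φ : B_3(−4) → End_K(V^{⊗3}), and moreover ker(φ) = K·α is one-dimensional. -/
open scoped BigOperators Classical
open MulOpposite

noncomputable section

namespace SpBrauer

/-- the element `α = (1+s_1)(1+s_2+s_2s_1) + (1+s_2+s_1s_2)e_1(1+s_2+s_2s_1)`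
of the Brauer algebra `B_3(-4)` (generators `0`-indexed). -/
def alphaElt (K : Type) [Field K] : BrauerAlg K (-(4 : K)) 3 :=
  (1 + bS K (-(4:K)) 3 0) *
    (1 + bS K (-(4:K)) 3 1 + bS K (-(4:K)) 3 1 * bS K (-(4:K)) 3 0) +
  (1 + bS K (-(4:K)) 3 1 + bS K (-(4:K)) 3 0 * bS K (-(4:K)) 3 1) * bE K (-(4:K)) 3 0 *
    (1 + bS K (-(4:K)) 3 1 + bS K (-(4:K)) 3 1 * bS K (-(4:K)) 3 0)


/-! The fifteen words `word` (the six permutations and the nine words `u e₁ v`) span `B₃(-4)`: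
left multiplication by each generator maps every word to a scalar multiple of a word. Under `φ`
each word acts on the 64 basis tensors by an explicit integer matrix, and `α` is the sum of all
fifteen words. These matrices sum to zero, so `φ α = 0`. Conversely, for every word `w ≠ 1`
there is an entry at which the matrices of `w` and of a word closer to `1` are `±1` and `∓1`
while all other words vanish; so a combination of the words lying in the kernel has all
coefficients equal, i.e. it is a multiple of `α`. Linear independence of the words is never
needed. -/

section IntegerMatrices

variable {α : Type} [Fintype α] [DecidableEq α]

def toEnd (R : Type) [CommRing R] : Matrix α α ℤ →+* Module.End R (α → R) :=
  Matrix.toLinAlgEquiv'.toRingHom.comp (Int.castRingHom R).mapMatrix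

lemma funMap_intCast_eq_toEnd (R : Type) [CommRing R] (M : Matrix α α ℤ) :
    funMap R α α (fun b a => (M b a : R)) = toEnd R M := by
  ext f b
  simp [toEnd, funMap, Matrix.mulVec, dotProduct]

lemma sum_smul_toEnd_eq_zero_iff (R : Type) [CommRing R] {ι : Type} [Fintype ι] (c : ι → R)
    (M : ι → Matrix α α ℤ) :
    ∑ i, c i • toEnd R (M i) = 0 ↔ ∀ p q, ∑ i, c i * (M i p q : R) = 0 := by
  have h : ∑ i, c i • toEnd R (M i) =
      Matrix.toLinAlgEquiv' (∑ i, c i • (M i).map (Int.cast : ℤ → R)) := by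
    simp [toEnd, map_sum, map_smul]
  rw [h, map_eq_zero_iff _ (AlgEquiv.injective _), ← Matrix.ext_iff]
  simp [Matrix.sum_apply]

lemma sum_mul_single_sub_single {ι R : Type} [Fintype ι] [DecidableEq ι] [Ring R] (c : ι → R)
    (i j : ι) : ∑ k, c k * ((Pi.single i 1 - Pi.single j 1 : ι → ℤ) k : R) = c i - c j := by
  simp [Pi.single_apply, mul_sub, Finset.sum_sub_distrib]

end IntegerMatrices

section GeneratorMatrices

variable {m n : ℕ}

def adjSwap (n : ℕ) (j : Fin (n - 1)) : Equiv.Perm (Fin n) :=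
  Equiv.swap ⟨j, by omega⟩ ⟨j + 1, by omega⟩

abbrev MultiIdx (m n : ℕ) : Type := Fin n → Fin (2 * m)

def sMat (m n : ℕ) (j : Fin (n - 1)) : Matrix (MultiIdx m n) (MultiIdx m n) ℤ :=
  Matrix.of fun c a => if a = c ∘ adjSwap n j then -1 else 0

def eMat (m n : ℕ) (j : Fin (n - 1)) : Matrix (MultiIdx m n) (MultiIdx m n) ℤ :=
  Matrix.of fun a b =>
    (if ∀ p : Fin n, p ≠ ⟨j, by omega⟩ → p ≠ ⟨j + 1, by omega⟩ → b p = a p then 1 else 0) *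
      -epsZ m (a ⟨j, by omega⟩) (a ⟨j + 1, by omega⟩) *
      epsZ m (b ⟨j, by omega⟩) (b ⟨j + 1, by omega⟩)

lemma sOp_eq_toEnd (R : Type) [CommRing R] (j : Fin (n - 1)) :
    sOp R m n j = toEnd R (sMat m n j) := by
  rw [← funMap_intCast_eq_toEnd, sOp]
  congr 1
  ext c a
  simp only [sMat, adjSwap, Matrix.of_apply]
  split_ifs <;> simp_all

lemma eOp_eq_toEnd (R : Type) [CommRing R] (j : Fin (n - 1)) :
    eOp R m n j = toEnd R (eMat m n j) := by
  rw [← funMap_intCast_eq_toEnd, eOp]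
  congr 1
  ext c a
  simp [eMat]

lemma sMat_mul_apply (j : Fin (n - 1)) (M : Matrix (MultiIdx m n) (MultiIdx m n) ℤ)
    (c a : MultiIdx m n) : (sMat m n j * M) c a = -M (c ∘ adjSwap n j) a := by
  simp [sMat, Matrix.mul_apply]

lemma mul_sMat_apply (j : Fin (n - 1)) (M : Matrix (MultiIdx m n) (MultiIdx m n) ℤ)
    (c a : MultiIdx m n) : (M * sMat m n j) c a = -M c (a ∘ adjSwap n j) := by
  have h (b : MultiIdx m n) : a = b ∘ adjSwap n j ↔ b = a ∘ adjSwap n j := by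
    constructor <;> rintro rfl <;> ext <;> simp [adjSwap, Equiv.swap_apply_self]
  simp [sMat, Matrix.mul_apply, h]

end GeneratorMatrices

section Spanning

open Submodule

variable {R X ι : Type} [CommRing R] {r : FreeAlgebra R X → FreeAlgebra R X → Prop}

lemma span_range_eq_top_of_ι_mul_mem (v : ι → RingQuot r) (h1 : 1 ∈ span R (Set.range v))
    (hmul : ∀ g i, RingQuot.mkAlgHom R r (FreeAlgebra.ι R g) * v i ∈ span R (Set.range v)) :
    span R (Set.range v) = ⊤ := by
  set S := span R (Set.range v)
  have hS (a : FreeAlgebra R X) : ∀ z ∈ S, RingQuot.mkAlgHom R r a * z ∈ S := by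
    induction a using FreeAlgebra.induction with
    | grade0 c => intro z hz; simpa [Algebra.smul_def] using S.smul_mem c hz
    | grade1 g =>
      have hle : S ≤ S.comap (LinearMap.mulLeft R (RingQuot.mkAlgHom R r (FreeAlgebra.ι R g))) :=
        span_le.2 (Set.range_subset_iff.2 (hmul g))
      exact fun z hz => hle hz
    | mul a b ha hb => intro z hz; simpa [mul_assoc] using ha _ (hb z hz)
    | add a b ha hb => intro z hz; simpa [add_mul] using S.add_mem (ha z hz) (hb z hz)
  refine eq_top_iff.2 fun y _ => ?_
  obtain ⟨a, rfl⟩ := RingQuot.mkAlgHom_surjective R r y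
  simpa using hS a 1 h1

end Spanning

section BrauerRelations

variable {R : Type} [CommRing R] {x : R} {n : ℕ}

lemma bS_mul_self (i : Fin (n - 1)) : bS R x n i * bS R x n i = 1 := by
  simpa only [bS, map_mul, map_one] using RingQuot.mkAlgHom_rel R (BRel.ss (x := x) i)

lemma bE_mul_self (i : Fin (n - 1)) : bE R x n i * bE R x n i = x • bE R x n i := by
  simpa only [bE, map_mul, map_smul] using RingQuot.mkAlgHom_rel R (BRel.ee (x := x) i)

lemma bE_mul_bS_self (i : Fin (n - 1)) : bE R x n i * bS R x n i = bE R x n i := by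
  simpa only [bS, bE, map_mul] using RingQuot.mkAlgHom_rel R (BRel.es (x := x) i)

lemma bS_mul_bE_self (i : Fin (n - 1)) : bS R x n i * bE R x n i = bE R x n i := by
  simpa only [bS, bE, map_mul] using RingQuot.mkAlgHom_rel R (BRel.se (x := x) i)

lemma mul_bS_mul_bS_self (w : BrauerAlg R x n) (i : Fin (n - 1)) :
    w * bS R x n i * bS R x n i = w := by
  rw [mul_assoc, bS_mul_self, mul_one]

lemma mul_bS_mul_bE_self (w : BrauerAlg R x n) (i : Fin (n - 1)) :
    w * bS R x n i * bE R x n i = w * bE R x n i := by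
  rw [mul_assoc, bS_mul_bE_self]

variable {i j : Fin (n - 1)}

lemma bS_braid (h : (j : ℕ) = i + 1) :
    bS R x n i * bS R x n j * bS R x n i = bS R x n j * bS R x n i * bS R x n j := by
  simpa only [bS, map_mul] using RingQuot.mkAlgHom_rel R (BRel.braid (x := x) i j h)

lemma bE_mul_bE_mul_bE (h : (j : ℕ) = i + 1) :
    bE R x n i * bE R x n j * bE R x n i = bE R x n i := by
  simpa only [bE, map_mul] using RingQuot.mkAlgHom_rel R (BRel.eje (x := x) i j h)

lemma bS_mul_bE_mul_bE (h : (j : ℕ) = i + 1) :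
    bS R x n i * bE R x n j * bE R x n i = bS R x n j * bE R x n i := by
  simpa only [bS, bE, map_mul] using RingQuot.mkAlgHom_rel R (BRel.see (x := x) i j h)

lemma bE_mul_bE_mul_bS (h : (j : ℕ) = i + 1) :
    bE R x n j * bE R x n i * bS R x n j = bE R x n j * bS R x n i := by
  simpa only [bS, bE, map_mul] using RingQuot.mkAlgHom_rel R (BRel.ees (x := x) i j h)

lemma bE_mul_bS_mul_bE (h : (j : ℕ) = i + 1) :
    bE R x n i * bS R x n j * bE R x n i = bE R x n i := by
  rw [mul_assoc, ← bS_mul_bE_mul_bE h, ← mul_assoc, ← mul_assoc, bE_mul_bS_self,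
    bE_mul_bE_mul_bE h]

lemma bE_eq_conj (h : (j : ℕ) = i + 1) :
    bE R x n j = bS R x n i * bS R x n j * bE R x n i * bS R x n j * bS R x n i := by
  calc bE R x n j = bE R x n j * bS R x n i * bS R x n i := (mul_bS_mul_bS_self _ i).symm
    _ = bS R x n i * bS R x n i * (bE R x n j * bE R x n i) * bS R x n j * bS R x n i := by
      rw [← bE_mul_bE_mul_bS h, bS_mul_self, one_mul, mul_assoc (bE R x n j)]
    _ = bS R x n i * (bS R x n i * bE R x n j * bE R x n i) * bS R x n j * bS R x n i := by
      simp only [mul_assoc]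
    _ = _ := by rw [bS_mul_bE_mul_bE h]; simp only [mul_assoc]

end BrauerRelations

section Words

variable (K : Type) [Field K]

local notation "s₁" => bS K (-(4 : K)) 3 0
local notation "s₂" => bS K (-(4 : K)) 3 1
local notation "e₁" => bE K (-(4 : K)) 3 0
local notation "e₂" => bE K (-(4 : K)) 3 1

def word : Fin 15 → BrauerAlg K (-(4 : K)) 3 :=
  ![1, s₁, s₂, s₁ * s₂, s₂ * s₁, s₁ * s₂ * s₁,
    e₁, e₁ * s₂, e₁ * s₂ * s₁, s₂ * e₁, s₂ * e₁ * s₂, s₂ * e₁ * s₂ * s₁,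
    s₁ * s₂ * e₁, s₁ * s₂ * e₁ * s₂, s₁ * s₂ * e₁ * s₂ * s₁]

lemma s₂_mul_s₁_mul_s₂ : s₂ * s₁ * s₂ = s₁ * s₂ * s₁ :=
  (bS_braid (i := 0) (j := 1) rfl).symm

lemma e₁_mul_s₂_mul_e₁ : e₁ * s₂ * e₁ = e₁ :=
  bE_mul_bS_mul_bE (i := 0) (j := 1) rfl

lemma e₂_eq : e₂ = s₁ * s₂ * e₁ * s₂ * s₁ :=
  bE_eq_conj (i := 0) (j := 1) rfl

lemma s₁_mul_word (i : Fin 15) :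
    s₁ * word K i = word K (![1, 0, 3, 2, 5, 4, 6, 7, 8, 12, 13, 14, 9, 10, 11] i) := by
  fin_cases i <;> simp [word, ← mul_assoc, bS_mul_self, bS_mul_bE_self]

lemma s₂_mul_word (i : Fin 15) :
    s₂ * word K i = word K (![2, 4, 0, 5, 1, 3, 9, 10, 11, 6, 7, 8, 12, 13, 14] i) := by
  fin_cases i <;> simp [word, ← mul_assoc, bS_mul_self, s₂_mul_s₁_mul_s₂, mul_bS_mul_bS_self,
    mul_bS_mul_bE_self]

lemma e₁_mul_word (i : Fin 15) :
    e₁ * word K i = (![1, 1, 1, 1, 1, 1, -4, -4, -4, 1, 1, 1, 1, 1, 1] i : K) •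
      word K (![6, 6, 7, 7, 8, 8, 6, 7, 8, 6, 7, 8, 6, 7, 8] i) := by
  fin_cases i <;> simp [word, ← mul_assoc, bE_mul_self, bE_mul_bS_self, e₁_mul_s₂_mul_e₁]

lemma span_range_word : Submodule.span K (Set.range (word K)) = ⊤ := by
  have hmem (i : Fin 15) : word K i ∈ Submodule.span K (Set.range (word K)) :=
    Submodule.subset_span ⟨i, rfl⟩
  refine span_range_eq_top_of_ι_mul_mem _ (hmem 0) fun g i => ?_
  rcases g with j | j <;> fin_cases j
  · exact s₁_mul_word K i ▸ hmem _
  · exact s₂_mul_word K i ▸ hmem _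
  · exact e₁_mul_word K i ▸ Submodule.smul_mem _ _ (hmem _)
  · show e₂ * word K i ∈ _
    simp only [e₂_eq, mul_assoc, s₁_mul_word, s₂_mul_word, e₁_mul_word, mul_smul_comm]
    exact Submodule.smul_mem _ _ (hmem _)

lemma alphaElt_eq_sum_word : alphaElt K = ∑ i, word K i := by
  simp only [alphaElt, word, Fin.sum_univ_succ, Fin.sum_univ_zero, Matrix.cons_val_zero,
    Matrix.cons_val_succ, add_zero]
  noncomm_ring

end Words

section WordMatrices

local notation "S₁" => sMat 2 3 0
local notation "S₂" => sMat 2 3 1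
local notation "E₁" => eMat 2 3 0

-- `φ` is defined on the opposite algebra, so a word's matrix is the product in reverse order.
def wordMat : Fin 15 → Matrix (MultiIdx 2 3) (MultiIdx 2 3) ℤ :=
  ![1, S₁, S₂, S₂ * S₁, S₁ * S₂, S₁ * S₂ * S₁,
    E₁, S₂ * E₁, S₁ * S₂ * E₁, E₁ * S₂, S₂ * E₁ * S₂, S₁ * S₂ * E₁ * S₂,
    E₁ * S₂ * S₁, S₂ * E₁ * S₂ * S₁, S₁ * S₂ * E₁ * S₂ * S₁]

lemma map_op_word {K : Type} [Field K]
    (φ : (BrauerAlg K (-(4 : K)) 3)ᵐᵒᵖ →ₐ[K] Module.End K (Ten K 2 3))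
    (hs : ∀ i, φ (op (bS K (-(4 : K)) 3 i)) = sOp K 2 3 i)
    (he : ∀ i, φ (op (bE K (-(4 : K)) 3 i)) = eOp K 2 3 i) (i : Fin 15) :
    φ (op (word K i)) = toEnd K (wordMat i) := by
  fin_cases i <;> simp [word, wordMat, hs, he, sOp_eq_toEnd, eOp_eq_toEnd, mul_assoc]

lemma forall_fin_three_pi {α : Type} {P : (Fin 3 → α) → Prop} :
    (∀ c, P c) ↔ ∀ x y z, P ![x, y, z] :=
  ⟨fun h _ _ _ => h _, fun h c => by convert h (c 0) (c 1) (c 2); ext i; fin_cases i <;> rfl⟩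

lemma comp_adjSwap_zero {α : Type} (c : Fin 3 → α) : c ∘ adjSwap 3 0 = ![c 1, c 0, c 2] := by
  ext i; fin_cases i <;> rfl

lemma comp_adjSwap_one {α : Type} (c : Fin 3 → α) : c ∘ adjSwap 3 1 = ![c 0, c 2, c 1] := by
  ext i; fin_cases i <;> rfl

lemma eMat_apply (c a : MultiIdx 2 3) :
    E₁ c a = (if a 2 = c 2 then 1 else 0) * -epsZ 2 (c 0) (c 1) * epsZ 2 (a 0) (a 1) := by
  simp [eMat, Fin.forall_fin_succ]

-- Every product in `wordMat` has `S₁` or `S₂` at one end, so `sMat_mul_apply` and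
-- `mul_sMat_apply` reduce its entries to entries of `1` or `E₁` at permuted indices.
lemma sum_wordMat : ∑ i, wordMat i = 0 := by
  ext c a
  simp only [Matrix.sum_apply, Fin.sum_univ_succ, Fin.sum_univ_zero, wordMat,
    Matrix.cons_val_zero, Matrix.cons_val_succ, Matrix.mul_assoc S₁, Matrix.mul_assoc S₂,
    sMat_mul_apply, mul_sMat_apply]
  revert c a
  simp only [forall_fin_three_pi, Matrix.one_apply, Matrix.zero_apply, sMat, Matrix.of_apply,
    eMat_apply, comp_adjSwap_zero, comp_adjSwap_one, Matrix.cons_val_zero, Matrix.cons_val_one,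
    Matrix.cons_val_two, Matrix.vecCons_inj, Matrix.head_cons, Matrix.tail_cons, and_true]
  decide +kernel

def wordParent : Fin 15 → Fin 15 := ![0, 0, 0, 1, 1, 0, 0, 2, 5, 2, 0, 1, 5, 1, 0]

lemma wordParent_wordParent (i : Fin 15) : wordParent (wordParent i) = 0 := by
  fin_cases i <;> rfl

def witnessEntry : Fin 15 → MultiIdx 2 3 × MultiIdx 2 3 :=
  ![(![0, 0, 0], ![0, 0, 0]), (![0, 0, 1], ![0, 0, 1]), (![0, 1, 1], ![0, 1, 1]),
    (![0, 1, 1], ![1, 0, 1]), (![0, 1, 0], ![1, 0, 0]), (![0, 1, 0], ![0, 1, 0]),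
    (![0, 3, 1], ![0, 3, 1]), (![0, 1, 3], ![0, 3, 1]), (![0, 1, 2], ![2, 1, 0]),
    (![0, 3, 1], ![0, 1, 3]), (![0, 1, 3], ![0, 1, 3]), (![0, 1, 2], ![1, 0, 2]),
    (![0, 3, 1], ![1, 3, 0]), (![0, 1, 3], ![1, 0, 3]), (![0, 1, 2], ![0, 1, 2])]

-- With the default bound, instance search for the decidability of the expanded goal fails and
-- falls back to `Classical.propDecidable`, which `decide` cannot evaluate.
set_option synthInstance.maxSize 100000 in
lemma wordMat_witnessEntry : ∀ i : Fin 15, i ≠ 0 →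
    (∀ j, wordMat j (witnessEntry i).1 (witnessEntry i).2 =
      (Pi.single i 1 - Pi.single (wordParent i) 1 : Fin 15 → ℤ) j) ∨
    (∀ j, wordMat j (witnessEntry i).1 (witnessEntry i).2 =
      (Pi.single (wordParent i) 1 - Pi.single i 1 : Fin 15 → ℤ) j) := by
  simp only [Fin.forall_fin_succ, IsEmpty.forall_iff, witnessEntry, wordParent, wordMat,
    Matrix.cons_val_zero, Matrix.cons_val_succ, Matrix.mul_assoc S₁, Matrix.mul_assoc S₂,
    sMat_mul_apply, mul_sMat_apply, ne_eq, not_true_eq_false, true_and]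
  simp only [Matrix.one_apply, sMat, Matrix.of_apply, eMat_apply, comp_adjSwap_zero,
    comp_adjSwap_one, Matrix.cons_val_zero, Matrix.cons_val_one, Matrix.cons_val_two,
    Matrix.cons_val_succ, Matrix.vecCons_inj, Matrix.head_cons, Matrix.tail_cons, and_true]
  decide +kernel

lemma sum_mul_wordMat_eq_zero_iff {K : Type} [Field K] (c : Fin 15 → K) :
    (∀ p q, ∑ i, c i * (wordMat i p q : K) = 0) ↔ ∀ i, c i = c 0 := by
  refine ⟨fun h => ?_, fun h p q => ?_⟩
  · have hparent (i : Fin 15) : c i = c (wordParent i) := by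
      by_cases hi : i = 0
      · subst hi; rfl
      have hw := h (witnessEntry i).1 (witnessEntry i).2
      rcases wordMat_witnessEntry i hi with hcol | hcol <;>
        simp only [hcol, sum_mul_single_sub_single, sub_eq_zero] at hw
      exacts [hw, hw.symm]
    exact fun i => (hparent i).trans ((hparent _).trans (congrArg c (wordParent_wordParent i)))
  · simp only [h _, ← Finset.mul_sum, ← Int.cast_sum, ← Matrix.sum_apply, sum_wordMat,
      Matrix.zero_apply, Int.cast_zero, mul_zero]

end WordMatrices

lemma map_op_sum_smul_word_eq_zero_iff {K : Type} [Field K]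
    (φ : (BrauerAlg K (-(4 : K)) 3)ᵐᵒᵖ →ₐ[K] Module.End K (Ten K 2 3))
    (hs : ∀ i, φ (op (bS K (-(4 : K)) 3 i)) = sOp K 2 3 i)
    (he : ∀ i, φ (op (bE K (-(4 : K)) 3 i)) = eOp K 2 3 i) (c : Fin 15 → K) :
    φ (op (∑ i, c i • word K i)) = 0 ↔ ∀ i, c i = c 0 := by
  simp only [Finset.op_sum, op_smul, map_sum, map_smul, map_op_word φ hs he]
  rw [sum_smul_toEnd_eq_zero_iff, sum_mul_wordMat_eq_zero_iff]

theorem kernel_for_m2_n3_general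
    (K : Type) [Field K]
    (φ : (BrauerAlg K (-(4 : K)) 3)ᵐᵒᵖ →ₐ[K] Module.End K (Ten K 2 3))
    (hs : ∀ i, φ (op (bS K (-(4 : K)) 3 i)) = sOp K 2 3 i)
    (he : ∀ i, φ (op (bE K (-(4 : K)) 3 i)) = eOp K 2 3 i) :
    φ (op (alphaElt K)) = 0 ∧
    ∀ y : BrauerAlg K (-(4 : K)) 3,
      φ (op y) = 0 ↔ y ∈ Submodule.span K {alphaElt K} := by
  have hker := map_op_sum_smul_word_eq_zero_iff φ hs he
  have hα : φ (op (alphaElt K)) = 0 := by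
    simpa [alphaElt_eq_sum_word] using (hker fun _ => 1).2 fun _ => rfl
  refine ⟨hα, fun y => ⟨fun hy => ?_, fun hy => ?_⟩⟩
  · have hy' : y ∈ Submodule.span K (Set.range (word K)) := by simp [span_range_word]
    obtain ⟨c, rfl⟩ := (Submodule.mem_span_range_iff_exists_fun K).1 hy'
    refine Submodule.mem_span_singleton.2 ⟨c 0, ?_⟩
    simp [alphaElt_eq_sum_word, Finset.smul_sum, (hker c).1 hy]
  · obtain ⟨k, rfl⟩ := Submodule.mem_span_singleton.1 hy
    rw [op_smul, map_smul, hα, smul_zero]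

/-- For `m = 2`, `n = 3` and an infinite field `K`, the element `α` spans
the kernel of `φ : B_3(-4) → End_K(V^{⊗3})`:  `ker(φ) = K·α`. -/
theorem kernel_for_m2_n3
    (K : Type) [Field K] [Infinite K]
    (φ : (BrauerAlg K (-(4 : K)) 3)ᵐᵒᵖ →ₐ[K] Module.End K (Ten K 2 3))
    (hs : ∀ i, φ (op (bS K (-(4 : K)) 3 i)) = sOp K 2 3 i)
    (he : ∀ i, φ (op (bE K (-(4 : K)) 3 i)) = eOp K 2 3 i) :
    φ (op (alphaElt K)) = 0 ∧
    ∀ y : BrauerAlg K (-(4 : K)) 3,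
      φ (op y) = 0 ↔ y ∈ Submodule.span K {alphaElt K} :=
  kernel_for_m2_n3_general K φ hs he

end SpBrauer
end
end

section
/- Let K be a field, m ≥ n, 1 ≤ f ≤ ⌊n/2⌋, and let c := (1,1',2,2',…,f,f') and ĉ := (f+1,(f+1)',…,2f,(2f)') be multi-indices in I(2m,2f). Let λ^{(1)} be the weight of v_ĉ ∈ V^{⊗2f}. Then the λ^{(1)}-weight component of v_c·(e_1 e_3 ⋯ e_{2f−1}) in V^{⊗2f} equals (−1)^f Σ_{ψ∈Ψ} v_ĉ·ψ = (−1)^f Σ_{ψ∈Ψ} (−1)^{ℓ(ψ)} v_{ĉ·ψ}, where Ψ is the normalizer of the Young subgroup S_{(2^f)} in S_{2f}. -/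
open scoped BigOperators Classical
open MulOpposite

noncomputable section

namespace SpBrauer

/-!
The operator of `E_f` on `V^{⊗2f}` has the rank-one matrix `(a, b) ↦ (-1)^f ε(a) ε(b)`, where
`ε(a) = ∏_t ε_{a_{2t-1} a_{2t}}` is the product of the pair signs of `a`; as `ε(c) = 1`, the
`v_b`-coefficient of `v_c E_f` is `(-1)^f ε(b)`. A multi-index `b` of weight `λ^{(1)}` is a
rearrangement `ĉ ∘ π` of the injective `ĉ`, and `ε(b) ≠ 0` forces `π` to map pairs `{2t-1, 2t}`
to pairs, i.e. `π ∈ Ψ`. Every `π ∈ Ψ` permutes the pairs and flips some of them, and both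
`ε(ĉ ∘ π)` and `sign π` are `(-1)` to the number of flipped pairs.
-/

lemma funMap_apply {R : Type} [CommRing R] {α β : Type} [Fintype α] (M : β → α → R)
    (w : α → R) (b : β) : funMap R α β M w b = ∑ a, M b a * w a := rfl

lemma funMap_comp_funMap {R : Type} [CommRing R] {α β γ : Type} [Fintype α] [Fintype β]
    (M : γ → β → R) (N : β → α → R) :
    funMap R β γ M ∘ₗ funMap R α β N = funMap R α γ (fun c a => ∑ b, M c b * N b a) := by
  ext w c
  simp only [LinearMap.comp_apply, funMap_apply, Finset.mul_sum, Finset.sum_mul, mul_assoc]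
  exact Finset.sum_comm

lemma funMap_dta {R : Type} [CommRing R] {m n : ℕ} {β : Type}
    (M : β → (Fin n → Fin (2*m)) → R) (i : Fin n → Fin (2*m)) :
    funMap R _ β M (dta R m n i) = fun b => M b i := by
  funext b
  simp [funMap_apply, dta]

def pairSign (m n f : ℕ) (hf : 2*f ≤ n) (a : Fin n → Fin (2*m)) : ℤ :=
  ∏ t : Fin f, epsZ m (a ⟨2*t, by omega⟩) (a ⟨2*t+1, by omega⟩)

lemma pairSign_succ {m n k : ℕ} (hk : 2*(k+1) ≤ n) (a : Fin n → Fin (2*m)) :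
    pairSign m n (k+1) hk a =
      pairSign m n k (by omega) a * epsZ m (a ⟨2*k, by omega⟩) (a ⟨2*k+1, by omega⟩) :=
  Fin.prod_univ_castSucc _

def EfMat (R : Type) [CommRing R] (m n f : ℕ) (hf : 2*f ≤ n) (a b : Fin n → Fin (2*m)) : R :=
  if ∀ p : Fin n, 2*f ≤ (p:ℕ) → b p = a p then
    (((-1)^f * pairSign m n f hf a * pairSign m n f hf b : ℤ) : R) else 0

lemma EfMat_mul_eOp {R : Type} [CommRing R] {m n k : ℕ} (hk : 2*(k+1) ≤ n)
    (a b : Fin n → Fin (2*m)) :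
    ∑ x, EfMat R m n k (by omega) a x *
      ((if ∀ p : Fin n, p ≠ ⟨2*k, by omega⟩ → p ≠ ⟨2*k+1, by omega⟩ → b p = x p then 1 else 0) *
        (-((epsZ m (x ⟨2*k, by omega⟩) (x ⟨2*k+1, by omega⟩) : ℤ) : R)) *
        ((epsZ m (b ⟨2*k, by omega⟩) (b ⟨2*k+1, by omega⟩) : ℤ) : R))
      = EfMat R m n (k+1) hk a b := by
  -- the only `x` agreeing with `a` from position `2k` on and with `b` off the pair `k`
  set x₀ : Fin n → Fin (2*m) := fun p => if (p:ℕ) < 2*k then b p else a p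
  rw [Finset.sum_eq_single x₀]
  · have hlow : pairSign m n k (by omega) x₀ = pairSign m n k (by omega) b :=
      Finset.prod_congr rfl fun t _ => by
        simp [x₀, show 2*(t:ℕ)+1 < 2*k by omega]
    have hk₀ : x₀ ⟨2*k, by omega⟩ = a ⟨2*k, by omega⟩ := by simp [x₀]
    have hk₁ : x₀ ⟨2*k+1, by omega⟩ = a ⟨2*k+1, by omega⟩ := by simp [x₀]
    have hagree : (∀ p : Fin n, p ≠ ⟨2*k, by omega⟩ → p ≠ ⟨2*k+1, by omega⟩ → b p = x₀ p) ↔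
        ∀ p : Fin n, 2*(k+1) ≤ (p:ℕ) → b p = a p := by
      refine ⟨fun h p hp => ?_, fun h p h₀ h₁ => ?_⟩
      · simpa [x₀, show ¬ (p:ℕ) < 2*k by omega] using h p (by grind) (by grind)
      · by_cases hp : (p:ℕ) < 2*k
        · simp [x₀, hp]
        · simp only [x₀, hp, if_false]
          exact h p (by grind)
    rw [EfMat, if_pos fun p hp => by simp [x₀, show ¬ (p:ℕ) < 2*k by omega], hlow, hk₀, hk₁,
      EfMat, if_congr hagree rfl rfl, pairSign_succ, pairSign_succ]
    split_ifs <;> push_cast <;> ring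
  · intro x _ hx
    by_cases hhigh : ∀ p : Fin n, 2*k ≤ (p:ℕ) → x p = a p
    · have hoff : ¬ ∀ p : Fin n, p ≠ ⟨2*k, by omega⟩ → p ≠ ⟨2*k+1, by omega⟩ → b p = x p := by
        refine fun hoff => hx (funext fun p => ?_)
        by_cases hp : (p:ℕ) < 2*k
        · simp only [x₀, hp, if_true]
          exact (hoff p (by grind) (by grind)).symm
        · simp only [x₀, hp, if_false]
          exact hhigh p (by omega)
      simp [hoff]
    · simp [EfMat, hhigh]
  · simp

lemma EfOp_succ (R : Type) [CommRing R] (m n k : ℕ) (hk : 2*(k+1) ≤ n) :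
    EfOp R m n (k+1) hk = EfOp R m n k (by omega) * eOp R m n ⟨2*k, by omega⟩ := by
  rw [EfOp, List.ofFn_succ', List.prod_concat]
  rfl

theorem EfOp_eq_funMap (R : Type) [CommRing R] (m n f : ℕ) (hf : 2*f ≤ n) :
    EfOp R m n f hf = funMap R _ _ (EfMat R m n f hf) := by
  induction f with
  | zero =>
    refine LinearMap.ext fun w => funext fun a => ?_
    simp [EfOp, EfMat, pairSign, funMap_apply, ← funext_iff]
  | succ k ih =>
    rw [EfOp_succ, ih, Module.End.mul_eq_comp, eOp, funMap_comp_funMap]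
    congr 1
    funext a b
    exact EfMat_mul_eOp hf a b

lemma epsZ_conjIdx_of_lt {m : ℕ} {i : Fin (2*m)} (hi : (i:ℕ) < m) :
    epsZ m i (conjIdx m i) = 1 := by
  have hv : (conjIdx m i : ℕ) = 2*m - 1 - i := rfl
  simp only [epsZ, hv]
  split_ifs <;> omega

lemma epsZ_conjIdx_left_of_lt {m : ℕ} {i : Fin (2*m)} (hi : (i:ℕ) < m) :
    epsZ m (conjIdx m i) i = -1 := by
  have hv : (conjIdx m i : ℕ) = 2*m - 1 - i := rfl
  simp only [epsZ, hv]
  split_ifs <;> omega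

lemma eq_conjIdx_of_epsZ_ne_zero {m : ℕ} {i j : Fin (2*m)} (h : epsZ m i j ≠ 0) :
    j = conjIdx m i := by
  simp only [epsZ] at h
  split_ifs at h with hij
  all_goals first | exact absurd rfl h | exact Fin.ext (by simp only [conjIdx]; omega)

lemma conjIdx_conjIdx (m : ℕ) (i : Fin (2*m)) : conjIdx m (conjIdx m i) = i :=
  Fin.ext (by simp only [conjIdx]; omega)

lemma EfOp_dta_apply (R : Type) [CommRing R] (m f : ℕ) (c b : Fin (2*f) → Fin (2*m)) :
    EfOp R m (2*f) f le_rfl (dta R m (2*f) c) b =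
      (((-1)^f * pairSign m (2*f) f le_rfl b * pairSign m (2*f) f le_rfl c : ℤ) : R) := by
  simp only [EfOp_eq_funMap, funMap_dta, EfMat]
  exact if_pos fun p hp => absurd p.isLt (by omega)

lemma pairSign_cIdx (m n f : ℕ) (hf : 2*f ≤ n) (hfm : f ≤ m) (kk : Fin n → Fin (2*m)) :
    pairSign m n f hf (cIdx m n f hfm kk) = 1 := by
  refine Finset.prod_eq_one fun t _ => ?_
  have ht := t.isLt
  have h₀ : cIdx m n f hfm kk ⟨2*t, by omega⟩ = ⟨t, by omega⟩ := by
    simp only [cIdx]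
    rw [dif_pos (by omega), if_pos (by omega)]
    exact Fin.ext (by simp only; omega)
  have h₁ : cIdx m n f hfm kk ⟨2*t+1, by omega⟩ = conjIdx m ⟨t, by omega⟩ := by
    simp only [cIdx]
    rw [dif_pos (by omega), if_neg (by omega)]
    congr 2
    omega
  rw [h₀, h₁, epsZ_conjIdx_of_lt (by simp only; omega)]

def pairEquiv (f : ℕ) : Fin f × Bool ≃ Fin (2*f) where
  toFun x := ⟨2*(x.1:ℕ) + x.2.toNat, by have := x.1.isLt; have := x.2.toNat_le; omega⟩
  invFun p := (⟨(p:ℕ)/2, by omega⟩, decide ((p:ℕ)%2 = 1))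
  left_inv := by
    rintro ⟨t, r⟩
    cases r <;> ext <;> simp; omega
  right_inv p := by
    ext
    rcases Nat.mod_two_eq_zero_or_one (p:ℕ) with h | h <;> simp [h] <;> omega

lemma pairEquiv_val {f : ℕ} (x : Fin f × Bool) : (pairEquiv f x : ℕ) = 2*(x.1:ℕ) + x.2.toNat := rfl

lemma pairEquiv_surj {f : ℕ} (p : Fin (2*f)) : ∃ t r, p = pairEquiv f (t, r) :=
  ⟨_, _, ((pairEquiv f).apply_symm_apply p).symm⟩

lemma pairSign_eq_prod {m f : ℕ} (b : Fin (2*f) → Fin (2*m)) :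
    pairSign m (2*f) f le_rfl b =
      ∏ t, epsZ m (b (pairEquiv f (t, false))) (b (pairEquiv f (t, true))) := rfl

def boolXor (c : Bool) : Equiv.Perm Bool := if c then Equiv.swap false true else 1

lemma boolXor_apply (c r : Bool) : boolXor c r = (c ^^ r) := by
  cases c <;> cases r <;> decide

def psiOf (f : ℕ) (σ : Equiv.Perm (Fin f)) (s : Fin f → Bool) : Equiv.Perm (Fin (2*f)) :=
  (pairEquiv f).permCongr
    (Equiv.prodCongrLeft (fun _ => σ) * Equiv.prodCongrRight (fun t => boolXor (s t)))

lemma psiOf_pairEquiv {f : ℕ} (σ : Equiv.Perm (Fin f)) (s : Fin f → Bool) (t : Fin f) (r : Bool) :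
    psiOf f σ s (pairEquiv f (t, r)) = pairEquiv f (σ t, s t ^^ r) := by
  simp [psiOf, Equiv.permCongr_apply, boolXor_apply]

lemma sign_psiOf (f : ℕ) (σ : Equiv.Perm (Fin f)) (s : Fin f → Bool) :
    ((Equiv.Perm.sign (psiOf f σ s) : ℤˣ) : ℤ) = ∏ t, if s t then -1 else 1 := by
  have hσ : ∏ _r : Bool, Equiv.Perm.sign σ = 1 := by simp
  rw [psiOf, Equiv.Perm.sign_permCongr, map_mul, Equiv.Perm.sign_prodCongrLeft, hσ, one_mul,
    Equiv.Perm.sign_prodCongrRight, Units.coe_prod]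
  refine Finset.prod_congr rfl fun t _ => ?_
  cases s t <;> simp [boolXor]

def pairSwap (f : ℕ) : Equiv.Perm (Fin (2*f)) := psiOf f 1 fun _ => true

lemma pairSwap_pairEquiv {f : ℕ} (t : Fin f) (r : Bool) :
    pairSwap f (pairEquiv f (t, r)) = pairEquiv f (t, !r) := by
  simp [pairSwap, psiOf_pairEquiv]

lemma pairSwap_pairSwap {f : ℕ} (p : Fin (2*f)) : pairSwap f (pairSwap f p) = p := by
  obtain ⟨t, r, rfl⟩ := pairEquiv_surj p
  simp [pairSwap_pairEquiv]

lemma pairSwap_ne {f : ℕ} (p : Fin (2*f)) : pairSwap f p ≠ p := by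
  obtain ⟨t, r, rfl⟩ := pairEquiv_surj p
  simp [pairSwap_pairEquiv]

lemma div_two_eq_div_two_iff {f : ℕ} (p q : Fin (2*f)) :
    (p:ℕ)/2 = (q:ℕ)/2 ↔ q = p ∨ q = pairSwap f p := by
  obtain ⟨t, r, rfl⟩ := pairEquiv_surj p
  obtain ⟨t', r', rfl⟩ := pairEquiv_surj q
  have hdiv : ∀ (u : Fin f) (b : Bool), (pairEquiv f (u, b) : ℕ)/2 = u := fun u b => by
    have := b.toNat_le; show (2*(u:ℕ) + b.toNat)/2 = u; omega
  rw [hdiv, hdiv, pairSwap_pairEquiv, (pairEquiv f).apply_eq_iff_eq,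
    (pairEquiv f).apply_eq_iff_eq, Fin.val_inj]
  cases r <;> cases r' <;> simp [eq_comm]

lemma fixHigh_two_mul (f : ℕ) (z : Equiv.Perm (Fin (2*f))) : FixHigh (2*f) f z :=
  fun a ha => absurd a.isLt (by omega)

lemma rowStabP_iff {f : ℕ} (w : Equiv.Perm (Fin (2*f))) :
    RowStabP (2*f) f w ↔ ∀ p, w p = p ∨ w p = pairSwap f p := by
  simp only [RowStabP, fixHigh_two_mul, true_and]
  exact forall_congr' fun p => eq_comm.trans (div_two_eq_div_two_iff p (w p))

lemma PsiP.inv {n f : ℕ} {z : Equiv.Perm (Fin n)} (hz : PsiP n f z) : PsiP n f z⁻¹ := by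
  refine ⟨fun a ha => Equiv.Perm.inv_eq_iff_eq.mpr (hz.1 a ha).symm, fun w => ?_⟩
  simpa [mul_assoc] using (hz.2 (z⁻¹ * w * z)).symm

lemma commute_iff_apply {α : Type} {x y : Equiv.Perm α} :
    Commute x y ↔ ∀ a, x (y a) = y (x a) := by
  simp [Commute, SemiconjBy, Equiv.ext_iff]

lemma rowStabP_conj_of_commute {f : ℕ} {z w : Equiv.Perm (Fin (2*f))}
    (hz : Commute z (pairSwap f)) (hw : RowStabP (2*f) f w) :
    RowStabP (2*f) f (z * w * z⁻¹) := by
  rw [rowStabP_iff] at hw ⊢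
  intro p
  rcases hw (z⁻¹ p) with h | h
  · left
    rw [Equiv.Perm.mul_apply, Equiv.Perm.mul_apply, h]
    exact z.apply_symm_apply p
  · right
    rw [Equiv.Perm.mul_apply, Equiv.Perm.mul_apply, h, commute_iff_apply.mp hz]
    exact congrArg _ (z.apply_symm_apply p)

lemma psiP_iff_commute {f : ℕ} (z : Equiv.Perm (Fin (2*f))) :
    PsiP (2*f) f z ↔ Commute z (pairSwap f) := by
  refine ⟨fun hz => commute_iff_apply.mpr fun p => ?_, fun hz => ⟨fixHigh_two_mul f z, fun w =>
    ⟨rowStabP_conj_of_commute hz, fun hw => ?_⟩⟩⟩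
  · have hw : RowStabP (2*f) f (Equiv.swap p (pairSwap f p)) := by
      refine (rowStabP_iff _).mpr fun a => ?_
      rcases eq_or_ne a p with rfl | hap
      · simp
      rcases eq_or_ne a (pairSwap f p) with rfl | hap'
      · simp [pairSwap_pairSwap]
      · simp [Equiv.swap_apply_of_ne_of_ne hap hap']
    have hconj := (rowStabP_iff _).mp ((hz.2 _).mp hw) (z p)
    rw [← Equiv.swap_apply_apply, Equiv.swap_apply_left] at hconj
    exact hconj.resolve_left fun h => pairSwap_ne p (z.injective h)
  · simpa [mul_assoc] using rowStabP_conj_of_commute hz.inv_left hw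

lemma exists_psiOf_of_commute {f : ℕ} {z : Equiv.Perm (Fin (2*f))}
    (hz : Commute z (pairSwap f)) : ∃ σ s, z = psiOf f σ s := by
  set z' : Fin f × Bool → Fin f × Bool := fun x => (pairEquiv f).symm (z (pairEquiv f x))
  have hz'_inj : Function.Injective z' := fun x y h => by simpa [z'] using h
  have hz'_true : ∀ t, z' (t, true) = ((z' (t, false)).1, !(z' (t, false)).2) := fun t => by
    obtain ⟨u, r, hu⟩ := pairEquiv_surj (z (pairEquiv f (t, false)))
    have hswap : pairEquiv f (t, true) = pairSwap f (pairEquiv f (t, false)) :=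
      (pairSwap_pairEquiv t false).symm
    simp only [z']
    rw [hswap, commute_iff_apply.mp hz, hu, pairSwap_pairEquiv]
    simp
  set s : Fin f → Bool := fun t => (z' (t, false)).2
  have hz'_apply : ∀ t r, z' (t, r) = ((z' (t, false)).1, s t ^^ r) := fun t r => by
    cases r
    · simp [s]
    · simp [s, hz'_true]
  have hσ_inj : Function.Injective fun t => (z' (t, false)).1 := fun t t' h => by
    replace h : (z' (t, false)).1 = (z' (t', false)).1 := h
    have h' : z' (t, false) = z' (t', s t' ^^ s t) := by
      rw [hz'_apply t', ← h]
      simp [s]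
    exact congrArg Prod.fst (hz'_inj h')
  refine ⟨Equiv.ofBijective _ (Finite.injective_iff_bijective.mp hσ_inj), s, Equiv.ext fun p => ?_⟩
  obtain ⟨t, r, rfl⟩ := pairEquiv_surj p
  rw [psiOf_pairEquiv, ← (pairEquiv f).apply_symm_apply (z _)]
  exact congrArg (pairEquiv f) (hz'_apply t r)

lemma cHatIdx_pairEquiv {m f : ℕ} (hm : 2*f ≤ m) (u : Fin f) (r : Bool) :
    cHatIdx m f hm (pairEquiv f (u, r)) =
      if r then conjIdx m ⟨f + u, by omega⟩ else ⟨f + u, by omega⟩ := by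
  cases r <;> simp [cHatIdx, pairEquiv_val, Nat.mul_add_div]

lemma cHatIdx_injective {m f : ℕ} (hm : 2*f ≤ m) : Function.Injective (cHatIdx m f hm) := by
  intro p q h
  obtain ⟨u, r, rfl⟩ := pairEquiv_surj p
  obtain ⟨u', r', rfl⟩ := pairEquiv_surj q
  have hu := u.isLt
  have hu' := u'.isLt
  rw [cHatIdx_pairEquiv, cHatIdx_pairEquiv, Fin.ext_iff] at h
  cases r <;> cases r' <;> simp [conjIdx] at h <;> first | omega | simp [Fin.ext_iff]; omega

lemma conjIdx_cHatIdx {m f : ℕ} (hm : 2*f ≤ m) (p : Fin (2*f)) :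
    conjIdx m (cHatIdx m f hm p) = cHatIdx m f hm (pairSwap f p) := by
  obtain ⟨u, r, rfl⟩ := pairEquiv_surj p
  cases r <;> simp [cHatIdx_pairEquiv, pairSwap_pairEquiv, conjIdx_conjIdx]

lemma epsZ_cHatIdx_pairEquiv {m f : ℕ} (hm : 2*f ≤ m) (u : Fin f) (r : Bool) :
    epsZ m (cHatIdx m f hm (pairEquiv f (u, r))) (cHatIdx m f hm (pairEquiv f (u, !r))) =
      if r then -1 else 1 := by
  have hu := u.isLt
  cases r
  · simp only [cHatIdx_pairEquiv, Bool.not_false, if_true]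
    exact epsZ_conjIdx_of_lt (by show f + (u:ℕ) < m; omega)
  · simp only [cHatIdx_pairEquiv, Bool.not_true, if_true]
    exact epsZ_conjIdx_left_of_lt (by show f + (u:ℕ) < m; omega)

lemma pairSign_cHatIdx_comp_psiOf {m f : ℕ} (hm : 2*f ≤ m) (σ : Equiv.Perm (Fin f))
    (s : Fin f → Bool) :
    pairSign m (2*f) f le_rfl (cHatIdx m f hm ∘ psiOf f σ s) = Equiv.Perm.sign (psiOf f σ s) := by
  rw [pairSign_eq_prod, sign_psiOf]
  refine Finset.prod_congr rfl fun t _ => ?_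
  simp only [Function.comp_apply, psiOf_pairEquiv, Bool.xor_false, Bool.xor_true]
  exact epsZ_cHatIdx_pairEquiv hm (σ t) (s t)

lemma pairSign_cHatIdx_comp {m f : ℕ} (hm : 2*f ≤ m) {z : Equiv.Perm (Fin (2*f))}
    (hz : PsiP (2*f) f z) : pairSign m (2*f) f le_rfl (cHatIdx m f hm ∘ z) = Equiv.Perm.sign z := by
  obtain ⟨σ, s, rfl⟩ := exists_psiOf_of_commute ((psiP_iff_commute z).mp hz)
  exact pairSign_cHatIdx_comp_psiOf hm σ s

lemma psiP_of_pairSign_ne_zero {m f : ℕ} (hm : 2*f ≤ m) {z : Equiv.Perm (Fin (2*f))}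
    (h : pairSign m (2*f) f le_rfl (cHatIdx m f hm ∘ z) ≠ 0) : PsiP (2*f) f z := by
  have hpair : ∀ t, z (pairEquiv f (t, true)) = pairSwap f (z (pairEquiv f (t, false))) := by
    intro t
    rw [pairSign_eq_prod] at h
    apply cHatIdx_injective hm
    rw [← conjIdx_cHatIdx]
    exact eq_conjIdx_of_epsZ_ne_zero (Finset.prod_ne_zero_iff.mp h t (Finset.mem_univ t))
  refine (psiP_iff_commute z).mpr (commute_iff_apply.mpr fun p => ?_)
  obtain ⟨t, r, rfl⟩ := pairEquiv_surj p
  cases r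
  · simpa [pairSwap_pairEquiv] using hpair t
  · rw [pairSwap_pairEquiv, Bool.not_true, hpair t, pairSwap_pairSwap]

lemma wtOf_comp_perm {m k : ℕ} (a : Fin k → Fin (2*m)) (π : Equiv.Perm (Fin k)) :
    wtOf m k (a ∘ π) = wtOf m k a :=
  funext fun _ => Finset.card_equiv π (by simp)

lemma exists_perm_of_wtOf_eq {m k : ℕ} {a b : Fin k → Fin (2*m)} (ha : Function.Injective a)
    (h : wtOf m k b = wtOf m k a) : ∃ π : Equiv.Perm (Fin k), b = a ∘ π := by
  have hfib : ∀ j, wtOf m k a j ≤ 1 := fun j => Finset.card_le_one.mpr fun p hp q hq =>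
    ha ((Finset.mem_filter.mp hp).2.trans (Finset.mem_filter.mp hq).2.symm)
  have hmem : ∀ p, ∃ q, a q = b p := fun p => by
    have hpos : 0 < wtOf m k a (b p) := by
      rw [← h]
      exact Finset.card_pos.mpr ⟨p, by simp⟩
    obtain ⟨q, hq⟩ := Finset.card_pos.mp hpos
    exact ⟨q, (Finset.mem_filter.mp hq).2⟩
  choose g hg using hmem
  have hg_inj : Function.Injective g := fun p p' hpp => by
    have hle : wtOf m k b (b p) ≤ 1 := h ▸ hfib (b p)
    exact Finset.card_le_one.mp hle p (by simp) p' (by simp [← hg, hpp])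
  exact ⟨Equiv.ofBijective g (Finite.injective_iff_bijective.mp hg_inj), funext fun p => (hg p).symm⟩

theorem sum_psiP_sign_eq {m f : ℕ} (hm : 2*f ≤ m) (b : Fin (2*f) → Fin (2*m)) :
    (∑ ψ ∈ Finset.univ.filter (fun ψ => PsiP (2*f) f ψ),
        if cHatIdx m f hm = b ∘ ψ then (Equiv.Perm.sign ψ : ℤ) else 0) =
      if wtOf m (2*f) b = wtOf m (2*f) (cHatIdx m f hm) then pairSign m (2*f) f le_rfl b
      else 0 := by
  by_cases hb : ∃ φ, PsiP (2*f) f φ ∧ b = cHatIdx m f hm ∘ φ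
  · obtain ⟨φ, hφ, rfl⟩ := hb
    have hunique : ∀ ψ : Equiv.Perm (Fin (2*f)),
        cHatIdx m f hm = (cHatIdx m f hm ∘ φ) ∘ ψ → ψ = φ⁻¹ := fun ψ h => by
      have hid : ⇑(φ * ψ) = ⇑(1 : Equiv.Perm (Fin (2*f))) :=
        (cHatIdx_injective hm).comp_left h.symm
      exact eq_inv_of_mul_eq_one_right (DFunLike.coe_injective hid)
    rw [if_pos (wtOf_comp_perm _ _), pairSign_cHatIdx_comp hm hφ,
      Finset.sum_eq_single_of_mem φ⁻¹ (by simpa using hφ.inv), if_pos (by ext; simp),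
      Equiv.Perm.sign_inv]
    exact fun ψ _ hψ => if_neg fun h => hψ (hunique ψ h)
  · rw [Finset.sum_eq_zero fun ψ hψ => if_neg fun h =>
      hb ⟨ψ⁻¹, (Finset.mem_filter.mp hψ).2.inv, by rw [h]; ext; simp⟩]
    split_ifs with hwt
    · obtain ⟨π, rfl⟩ := exists_perm_of_wtOf_eq (cHatIdx_injective hm) hwt
      by_contra h0
      exact hb ⟨π, psiP_of_pairSign_ne_zero hm (Ne.symm h0), rfl⟩
    · rfl

/-- Let `K` be a field, `m ≥ n`, `1 ≤ f ≤ ⌊n/2⌋`.  The weight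
component, for the weight `λ^{(1)}` of `v_ĉ`, of `v_c · (e_1e_3⋯e_{2f-1})` in `V^{⊗2f}`
equals `(-1)^f ∑_{ψ ∈ Ψ} v_ĉ · ψ`, where `Ψ` is the normalizer of `S_{(2^f)}`
in `S_{2f}`. -/
theorem weight_component_of_vc_Ef
    (K : Type) [Field K] (m n f : ℕ) (hmn : n ≤ m) (hf1 : 1 ≤ f) (hfn : 2*f ≤ n) :
    wcomp K m (2*f) (wtOf m (2*f) (cHatIdx m f (by omega)))
      ((EfOp K m (2*f) f (by omega))
        (dta K m (2*f) (cIdx m (2*f) f (by omega) (fun _ => ⟨0, by omega⟩))))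
    = ((-1 : K)^f) •
        ∑ ψ ∈ Finset.univ.filter (fun ψ => PsiP (2*f) f ψ),
          (permOp K m (2*f) ψ) (dta K m (2*f) (cHatIdx m f (by omega))) := by
  funext b
  have key := congrArg (Int.cast : ℤ → K) (sum_psiP_sign_eq (by omega) b)
  push_cast at key
  simp only [wcomp, EfOp_dta_apply, pairSign_cIdx, Pi.smul_apply, Finset.sum_apply, permOp,
    funMap_dta, smul_eq_mul, key]
  split_ifs <;> push_cast <;> ring

end SpBrauer
end
end
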